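/- Let d, n ∈ ℕ and define the hyperbolic cross Λ = {ν ∈ ℤ^d : ∏_{l=1}^d (|ν_l| + 1) ≤ n}. Then |Λ| ≤ 4 n^5 · 16^d. -/

import Mathlib

open Finset

/-!
Fixing the first coordinate `ν 0 = k` leaves a point of the `(d - 1)`-dimensional cross of
size `n / (|k| + 1)`. Hence `#Λ_d(n) ≤ n² 4^d` by induction on `d`: the inductive step costs the
factor `∑_{|k| ≤ n} (|k| + 1)⁻² ≤ 2 ∑_{j ≥ 1} j⁻² ≤ 4`. Finally `n² 4^d ≤ 4 n⁵ 16^d`.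
-/

theorem sum_natAbs_le_two_mul_sum {R : Type*} [CommSemiring R] [PartialOrder R]
    [IsOrderedRing R] {s : Finset ℤ} {t : Finset ℕ} (f : ℕ → R) (hf : ∀ j ∈ t, 0 ≤ f j)
    (hst : ∀ k ∈ s, k.natAbs ∈ t) : ∑ k ∈ s, f k.natAbs ≤ 2 * ∑ j ∈ t, f j := by
  rw [← sum_fiberwise_of_maps_to hst, mul_sum]
  refine sum_le_sum fun j hj => ?_
  have hfiber : #{k ∈ s | k.natAbs = j} ≤ 2 := calc
    #{k ∈ s | k.natAbs = j} ≤ #({(j : ℤ), -(j : ℤ)} : Finset ℤ) :=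
      card_le_card fun k hk => by
        simp only [mem_filter] at hk
        simp only [mem_insert, mem_singleton]
        omega
    _ ≤ 2 := card_le_two
  calc ∑ k ∈ s with k.natAbs = j, f k.natAbs
      = ∑ k ∈ s with k.natAbs = j, f j := sum_congr rfl fun k hk => by rw [(mem_filter.1 hk).2]
    _ = #{k ∈ s | k.natAbs = j} • f j := sum_const _
    _ ≤ 2 • f j := nsmul_le_nsmul_left (hf j hj) hfiber
    _ = 2 * f j := two_nsmul _ |>.trans (two_mul _).symm

theorem sum_range_inv_add_one_sq_le (m : ℕ) : ∑ j ∈ range m, (((j : ℝ) + 1) ^ 2)⁻¹ ≤ 2 := by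
  have h := sum_Ioo_inv_sq_le (α := ℝ) 0 (m + 1)
  rw [← Ico_add_one_left_eq_Ioo, ← sum_Ico_add' (c := 1)] at h
  push_cast at h
  rw [range_eq_Ico]
  simpa using h

theorem sum_Icc_inv_natAbs_add_one_sq_le (n : ℕ) :
    ∑ k ∈ Icc (-(n : ℤ)) n, (((k.natAbs : ℝ) + 1) ^ 2)⁻¹ ≤ 4 := calc
  _ ≤ 2 * ∑ j ∈ range (n + 1), (((j : ℝ) + 1) ^ 2)⁻¹ :=
    sum_natAbs_le_two_mul_sum (fun j : ℕ => (((j : ℝ) + 1) ^ 2)⁻¹) (fun _ _ => by positivity)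
      fun k hk => by rw [mem_Icc] at hk; rw [mem_range]; omega
  _ ≤ 2 * 2 := by gcongr; exact sum_range_inv_add_one_sq_le _
  _ = 4 := by norm_num

-- The box `[-n, n]^d` is redundant (see `mem_hyperbolicCross`); it only makes this a `Finset`.
noncomputable def hyperbolicCross (d n : ℕ) : Finset (Fin d → ℤ) :=
  {ν ∈ Fintype.piFinset fun _ => Icc (-(n : ℤ)) n | ∏ l, ((ν l).natAbs + 1) ≤ n}

theorem natAbs_add_one_le_prod {d : ℕ} (ν : Fin d → ℤ) (l : Fin d) :
    (ν l).natAbs + 1 ≤ ∏ i, ((ν i).natAbs + 1) :=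
  single_le_prod' (f := fun i => (ν i).natAbs + 1) (fun _ _ => Nat.le_add_left 1 _) (mem_univ l)

theorem mem_hyperbolicCross {d n : ℕ} {ν : Fin d → ℤ} :
    ν ∈ hyperbolicCross d n ↔ ∏ l, ((ν l).natAbs + 1) ≤ n := by
  refine ⟨fun h => (mem_filter.1 h).2, fun h => mem_filter.2 ⟨?_, h⟩⟩
  refine Fintype.mem_piFinset.2 fun l => mem_Icc.2 ?_
  have := (natAbs_add_one_le_prod ν l).trans h
  omega

theorem card_hyperbolicCross_zero_le (n : ℕ) : #(hyperbolicCross 0 n) ≤ n := by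
  rcases n.eq_zero_or_pos with rfl | hn
  · simp [eq_empty_iff_forall_notMem, mem_hyperbolicCross]
  · exact (card_le_univ _).trans (by rw [Fintype.card_unique]; exact hn)

theorem hyperbolicCross_succ_subset (d n : ℕ) :
    hyperbolicCross (d + 1) n ⊆ (Icc (-(n : ℤ)) n).biUnion fun k =>
      (hyperbolicCross d (n / (k.natAbs + 1))).image (Fin.cons k) := by
  intro ν hν
  rw [mem_hyperbolicCross] at hν
  have hhead := (natAbs_add_one_le_prod ν 0).trans hν
  refine mem_biUnion.2 ⟨ν 0, mem_Icc.2 (by omega), mem_image.2 ⟨Fin.tail ν, ?_, Fin.cons_self_tail ν⟩⟩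
  rw [mem_hyperbolicCross, Nat.le_div_iff_mul_le (Nat.succ_pos _), mul_comm]
  rwa [Fin.prod_univ_succ] at hν

theorem card_hyperbolicCross_succ_le (d n : ℕ) :
    #(hyperbolicCross (d + 1) n) ≤
      ∑ k ∈ Icc (-(n : ℤ)) n, #(hyperbolicCross d (n / (k.natAbs + 1))) :=
  (card_le_card (hyperbolicCross_succ_subset d n)).trans <|
    card_biUnion_le.trans <| sum_le_sum fun _ _ => card_image_le

theorem card_hyperbolicCross_le (d n : ℕ) : (#(hyperbolicCross d n) : ℝ) ≤ n ^ 2 * 4 ^ d := by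
  induction d generalizing n with
  | zero =>
    have h : #(hyperbolicCross 0 n) ≤ n ^ 2 :=
      (card_hyperbolicCross_zero_le n).trans (Nat.le_self_pow two_ne_zero n)
    simpa using (Nat.cast_le (α := ℝ)).2 h
  | succ d ih => calc
    (#(hyperbolicCross (d + 1) n) : ℝ)
        ≤ ∑ k ∈ Icc (-(n : ℤ)) n, (#(hyperbolicCross d (n / (k.natAbs + 1))) : ℝ) := by
          exact_mod_cast card_hyperbolicCross_succ_le d n
      _ ≤ ∑ k ∈ Icc (-(n : ℤ)) n, ((n : ℝ) / ((k.natAbs : ℝ) + 1)) ^ 2 * 4 ^ d := by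
          gcongr with k
          refine (ih _).trans ?_
          gcongr
          exact_mod_cast Nat.cast_div_le
      _ = n ^ 2 * 4 ^ d * ∑ k ∈ Icc (-(n : ℤ)) n, (((k.natAbs : ℝ) + 1) ^ 2)⁻¹ := by
          rw [mul_sum]
          refine sum_congr rfl fun k _ => ?_
          field_simp
      _ ≤ n ^ 2 * 4 ^ d * 4 := by gcongr; exact sum_Icc_inv_natAbs_add_one_sq_le n
      _ = n ^ 2 * 4 ^ (d + 1) := by ring

/-- the hyperbolic cross `Λ = {ν ∈ ℤ^d : ∏_l (|ν_l|+1) ≤ n}` is finite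
with cardinality at most `4 n⁵ 16^d`. -/
theorem hyperbolic_cross_card_bound (d n : ℕ) :
    {ν : Fin d → ℤ | (∏ l, ((ν l).natAbs + 1)) ≤ n}.Finite ∧
      {ν : Fin d → ℤ | (∏ l, ((ν l).natAbs + 1)) ≤ n}.ncard ≤ 4 * n ^ 5 * 16 ^ d := by
  have hset : {ν : Fin d → ℤ | (∏ l, ((ν l).natAbs + 1)) ≤ n} = hyperbolicCross d n := by
    ext ν; simp [mem_hyperbolicCross]
  have hcard : #(hyperbolicCross d n) ≤ n ^ 2 * 4 ^ d := by
    exact_mod_cast card_hyperbolicCross_le d n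
  rw [hset, Set.ncard_coe_finset]
  refine ⟨(hyperbolicCross d n).finite_toSet, hcard.trans ?_⟩
  have hpow : n ^ 2 ≤ n ^ 5 := by
    rcases n.eq_zero_or_pos with rfl | hn
    · simp
    · exact Nat.pow_le_pow_right hn (by norm_num)
  calc n ^ 2 * 4 ^ d ≤ n ^ 5 * 16 ^ d := Nat.mul_le_mul hpow (Nat.pow_le_pow_left (by norm_num) d)
    _ ≤ 4 * n ^ 5 * 16 ^ d := by rw [mul_assoc]; exact Nat.le_mul_of_pos_left _ (by norm_num)
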